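/- For every unit vector φ ∈ ℂ^G and every (g,h) ∈ G × G, Σ_{k ∈ G} |⟪(((D_h·P_g) ⊗ id)Φ) ⊗ e_k, φ ⊗ Φ⟫|² = 1/d². (In the braid-free qudit teleportation protocol, Alice's measurement outcomes (g,h) are uniformly distributed: each of the d² outcomes occurs with probability 1/d².) -/

import Mathlib

noncomputable section
open Matrix
open scoped InnerProductSpace

/-- The group `G = (ZMod 2)ⁿ`. -/
abbrev G (n : ℕ) : Type := Fin n → ZMod 2

/-- The standard symmetric bicharacter `χ(g,h) = (-1)^{g·h}` of `(ZMod 2)ⁿ`. -/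
def chi {n : ℕ} (g h : G n) : ℂ := (-1) ^ (∑ i, g i * h i).val

/-- The standard basis vector `e_k` of `ℂ^G`. -/
def eb {n : ℕ} (k : G n) : G n → ℂ := Pi.single k 1

/-- The shift operator `P_g : e_k ↦ e_{k+g}` on `ℂ^G`, as a matrix. -/
def Pmat {n : ℕ} (g : G n) : Matrix (G n) (G n) ℂ :=
  fun a b => if a = b + g then 1 else 0

/-- The phase operator `D_h : e_k ↦ χ(h,k)·e_k` on `ℂ^G`, as a matrix. -/
def Dmat {n : ℕ} (h : G n) : Matrix (G n) (G n) ℂ :=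
  Matrix.diagonal (fun k => chi h k)

/-- Tensor product of two vectors of `ℂ^G`, as a vector of `ℂ^G ⊗ ℂ^G`. -/
def tensGG {n : ℕ} (v w : G n → ℂ) : G n × G n → ℂ := fun p => v p.1 * w p.2

/-- The e-dit (maximally entangled 2-qudit state)
`Φ = d^{-1/2} Σ_{k∈G} e_k ⊗ e_k`, `d = 2ⁿ`. -/
def Phi (n : ℕ) : G n × G n → ℂ :=
  ((Real.sqrt (2 ^ n) : ℂ))⁻¹ • ∑ k : G n, tensGG (eb k) (eb k)

/-- The action of `A ⊗ id` on `ℂ^G ⊗ ℂ^G`. -/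
def actL {n : ℕ} (A : Matrix (G n) (G n) ℂ) (w : G n × G n → ℂ) : G n × G n → ℂ :=
  fun p => ∑ k, A p.1 k * w (k, p.2)

/-- Tensor product of a qudit vector (first factor) with a 2-qudit vector
(second and third factors), as a vector of `ℂ^G ⊗ ℂ^G ⊗ ℂ^G`. -/
def tensG_GG {n : ℕ} (v : G n → ℂ) (w : G n × G n → ℂ) : G n × G n × G n → ℂ :=
  fun p => v p.1 * w p.2

/-- Tensor product of a 2-qudit vector (first and second factors) with a qudit
vector (third factor), as a vector of `ℂ^G ⊗ ℂ^G ⊗ ℂ^G`. -/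
def tensGG_G {n : ℕ} (w : G n × G n → ℂ) (v : G n → ℂ) : G n × G n × G n → ℂ :=
  fun p => w (p.1, p.2.1) * v p.2.2

/-- `ℂ^G` equipped with its Hermitian inner product. -/
def toE1 {n : ℕ} (f : G n → ℂ) : EuclideanSpace ℂ (G n) :=
  (WithLp.equiv 2 (G n → ℂ)).symm f

/-- `ℂ^G ⊗ ℂ^G ⊗ ℂ^G` equipped with its Hermitian inner product. -/
def toE3 {n : ℕ} (f : G n × G n × G n → ℂ) : EuclideanSpace ℂ (G n × G n × G n) :=
  (WithLp.equiv 2 (G n × G n × G n → ℂ)).symm f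

/-! The vector `((D_h P_g) ⊗ id) Φ` is `d^{-1/2}` times `χ(h, k+g)` on the pairs `(k+g, k)`
and zero elsewhere, so pairing it with `e_k` in the third factor against `φ ⊗ Φ` leaves the
single term at `(k+g, k, k)`: the amplitude of outcome `k` is `d⁻¹ · conj χ(h, k+g) · φ(k+g)`.
Since `|χ| = 1` and `k ↦ k + g` permutes `G`, the probabilities add up to `d⁻² ‖φ‖² = d⁻²`. -/

lemma Phi_apply {n : ℕ} (p : G n × G n) :
    Phi n p = (Real.sqrt (2 ^ n) : ℂ)⁻¹ * if p.1 = p.2 then 1 else 0 := by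
  simp [Phi, tensGG, eb, Pi.single_apply, eq_comm]

lemma Dmat_mul_Pmat_apply {n : ℕ} (g h a b : G n) :
    (Dmat h * Pmat g) a b = if a = b + g then chi h a else 0 := by
  simp [Dmat, Pmat, Matrix.diagonal_mul, mul_ite]

lemma actL_Dmat_mul_Pmat_Phi_apply {n : ℕ} (g h : G n) (p : G n × G n) :
    actL (Dmat h * Pmat g) (Phi n) p
      = (Real.sqrt (2 ^ n) : ℂ)⁻¹ * if p.1 = p.2 + g then chi h p.1 else 0 := by
  simp [actL, Dmat_mul_Pmat_apply, Phi_apply, mul_ite, mul_comm, ← ite_and, and_comm]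
  simp [ite_and]

lemma norm_chi {n : ℕ} (g h : G n) : ‖chi g h‖ = 1 := by
  simp [chi]

lemma inner_tensGG_G_actL_Phi_tensG_GG_Phi {n : ℕ} (g h k : G n) (φ : G n → ℂ) :
    ⟪toE3 (tensGG_G (actL (Dmat h * Pmat g) (Phi n)) (eb k)), toE3 (tensG_GG φ (Phi n))⟫_ℂ
      = ((2 : ℂ) ^ n)⁻¹ * starRingEnd ℂ (chi h (k + g)) * φ (k + g) := by
  have hd : ((Real.sqrt (2 ^ n) : ℂ)⁻¹) ^ 2 = ((2 : ℂ) ^ n)⁻¹ := by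
    rw [inv_pow, ← Complex.ofReal_pow, Real.sq_sqrt (by positivity)]
    push_cast; rfl
  simp [toE3, PiLp.inner_apply, tensGG_G, tensG_GG, actL_Dmat_mul_Pmat_Phi_apply, Phi_apply, eb,
    Pi.single_apply, Fintype.sum_prod_type, ite_mul, mul_ite, apply_ite (starRingEnd ℂ),
    ← ite_and, and_comm]
  simp [ite_and, ← hd]
  ring

lemma norm_inner_tensGG_G_actL_Phi_tensG_GG_Phi {n : ℕ} (g h k : G n) (φ : G n → ℂ) :
    ‖⟪toE3 (tensGG_G (actL (Dmat h * Pmat g) (Phi n)) (eb k)), toE3 (tensG_GG φ (Phi n))⟫_ℂ‖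
      = ((2 : ℝ) ^ n)⁻¹ * ‖φ (k + g)‖ := by
  simp [inner_tensGG_G_actL_Phi_tensG_GG_Phi, norm_chi]

theorem teleportation_outcomes_uniform_general (n : ℕ) (φ : G n → ℂ)
    (hφ : ‖toE1 φ‖ = 1) (g h : G n) :
    ∑ k : G n,
        ‖⟪toE3 (tensGG_G (actL (Dmat h * Pmat g) (Phi n)) (eb k)),
              toE3 (tensG_GG φ (Phi n))⟫_ℂ‖ ^ 2 =
      1 / ((2 : ℝ) ^ n) ^ 2 := by
  have hφ' : ∑ k, ‖φ k‖ ^ 2 = 1 :=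
    (EuclideanSpace.norm_sq_eq (toE1 φ)).symm.trans (by rw [hφ, one_pow])
  calc ∑ k : G n, ‖⟪toE3 (tensGG_G (actL (Dmat h * Pmat g) (Phi n)) (eb k)),
          toE3 (tensG_GG φ (Phi n))⟫_ℂ‖ ^ 2
      = ((2 : ℝ) ^ n)⁻¹ ^ 2 * ∑ k, ‖φ (k + g)‖ ^ 2 := by
        simp only [norm_inner_tensGG_G_actL_Phi_tensG_GG_Phi, mul_pow, Finset.mul_sum]
    _ = ((2 : ℝ) ^ n)⁻¹ ^ 2 * ∑ k, ‖φ k‖ ^ 2 :=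
        congrArg _ (Equiv.sum_comp (Equiv.addRight g) fun k => ‖φ k‖ ^ 2)
    _ = 1 / ((2 : ℝ) ^ n) ^ 2 := by rw [hφ', mul_one, inv_pow, one_div]

/-- In the braid-free qudit teleportation protocol, Alice's measurement
outcomes are uniformly distributed: for every unit vector `φ ∈ ℂ^G` and every
`(g,h) ∈ G × G`,
`Σ_{k ∈ G} |⟪(((D_h·P_g) ⊗ id)Φ) ⊗ e_k, φ ⊗ Φ⟫|² = 1/d²`. -/
theorem teleportation_outcomes_uniform (n : ℕ) (hn : 1 ≤ n) (φ : G n → ℂ)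
    (hφ : ‖toE1 φ‖ = 1) (g h : G n) :
    ∑ k : G n,
        ‖⟪toE3 (tensGG_G (actL (Dmat h * Pmat g) (Phi n)) (eb k)),
              toE3 (tensG_GG φ (Phi n))⟫_ℂ‖ ^ 2 =
      1 / ((2 : ℝ) ^ n) ^ 2 :=
  teleportation_outcomes_uniform_general n φ hφ g h
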